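/- arXiv:2007.14696 — 3 statements merged into one kernel-verified Lean document; each statement's English description precedes it below -/
import Mathlib

section
/- Let Δ be a finite set, let G ≤ Sym(Δ) be a transitive permutation group of rank r, and let m ≥ 1. Then the wreath product G ↑ Sym(m) in product action, as a permutation group on Δ^m, has rank equal to the binomial coefficient C(r + m − 1, m). -/
/-- The rank of a permutation group `G ≤ Sym(Ω)`: the number of orbits of `G`
on `Ω × Ω` under the componentwise action (the number of 2-orbits). -/
noncomputable def permRank {Ω : Type*} (G : Subgroup (Equiv.Perm Ω)) : ℕ :=
  Nat.card (MulAction.orbitRel.Quotient G (Ω × Ω))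

/-- The wreath product `G ↑ Sym(m)` in product action, as a subgroup of
`Sym(Δ^m)`: all permutations of the form `v ↦ fun i => g i (v (σ⁻¹ i))` with
`σ ∈ Sym(m)` and `g i ∈ G` for each `i`. -/
def productWreath {Δ : Type*} (G : Subgroup (Equiv.Perm Δ)) (m : ℕ) :
    Subgroup (Equiv.Perm (Fin m → Δ)) where
  carrier := {f | ∃ (σ : Equiv.Perm (Fin m)) (g : Fin m → Equiv.Perm Δ),
    (∀ i, g i ∈ G) ∧ ∀ (v : Fin m → Δ) (i : Fin m), f v i = g i (v (σ⁻¹ i))}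
  one_mem' := ⟨1, fun _ => 1, fun _ => G.one_mem, fun _ _ => rfl⟩
  mul_mem' := by
    rintro f f' ⟨σ, g, hgG, hf⟩ ⟨σ', g', hgG', hf'⟩
    refine ⟨σ * σ', fun i => g i * g' (σ⁻¹ i), fun i => G.mul_mem (hgG i) (hgG' (σ⁻¹ i)),
      fun v i => ?_⟩
    have : (f * f') v = f (f' v) := rfl
    rw [this, hf (f' v) i, hf' v (σ⁻¹ i)]
    rfl
  inv_mem' := by
    rintro f ⟨σ, g, hgG, hf⟩
    refine ⟨σ⁻¹, fun i => (g (σ i))⁻¹, fun i => G.inv_mem (hgG (σ i)), fun v i => ?_⟩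
    have h2 : f⁻¹ v = fun j => (g (σ j))⁻¹ (v (σ j)) := by
      apply f.injective
      rw [show f (f⁻¹ v) = v from Equiv.apply_symm_apply f v]
      funext j
      rw [hf]
      simp
    rw [h2]
    simp

/-!
Record a pair `(u, v)` of points of `Δ^m` by its `m` coordinate pairs `(u i, v i) ∈ Δ × Δ`.
The base group `G^m` moves each coordinate pair independently inside its `G`-orbit and
`Sym(m)` permutes the coordinates, so two pairs lie in the same 2-orbit of `G ↑ Sym(m)` exactly
when they have the same multiset of `G`-orbits of coordinate pairs. Every multiset of size `m`
of 2-orbits of `G` occurs, so the rank is the number of such multisets, `C(r + m - 1, m)`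
(stars and bars).
-/

open Finset MulAction

lemma Equiv.Perm.exists_comp_eq_of_map_univ_val_eq {ι α : Type*} [Fintype ι] [DecidableEq α]
    {f g : ι → α} (h : univ.val.map f = univ.val.map g) :
    ∃ σ : Equiv.Perm ι, f ∘ σ = g := by
  have hfiber (a : α) : Fintype.card {i // g i = a} = Fintype.card {i // f i = a} := by
    have := congrArg (Multiset.count a) h.symm
    simpa only [Multiset.count_map, Fintype.card_subtype, card_def, filter_val, eq_comm]
      using this
  exact ⟨Equiv.ofFiberEquiv fun a => Fintype.equivOfCardEq (hfiber a),
    funext (Equiv.ofFiberEquiv_map _)⟩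

namespace Sym

variable {α : Type*} {m : ℕ}

def ofFn (f : Fin m → α) : Sym α m :=
  ⟨univ.val.map f, by simp⟩

lemma ofFn_eq_ofFn_iff {f g : Fin m → α} :
    ofFn f = ofFn g ↔ ∃ σ : Equiv.Perm (Fin m), f ∘ σ = g := by
  classical
  refine ⟨fun h => Equiv.Perm.exists_comp_eq_of_map_univ_val_eq (congrArg Subtype.val h), ?_⟩
  rintro ⟨σ, rfl⟩
  refine Subtype.ext ?_
  simp only [ofFn, ← Multiset.map_map]
  rw [Multiset.map_univ_val_equiv]

lemma ofFn_surjective : Function.Surjective (ofFn : (Fin m → α) → Sym α m) := by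
  rintro ⟨s, hs⟩
  induction s using Quotient.inductionOn with
  | h l =>
    subst hs
    refine ⟨l.get, Subtype.ext ?_⟩
    change univ.val.map l.get = (l : Multiset α)
    rw [Fin.univ_val_map, List.ofFn_get]

end Sym

lemma Sym.ofFn_orbitRel_mk_eq_iff {H Y : Type*} [Group H] [MulAction H Y] {m : ℕ}
    {f g : Fin m → Y} :
    Sym.ofFn (fun i => (Quotient.mk'' (f i) : orbitRel.Quotient H Y)) =
        Sym.ofFn (fun i => Quotient.mk'' (g i)) ↔
      ∃ (σ : Equiv.Perm (Fin m)) (h : Fin m → H), ∀ i, h i • f (σ i) = g i := by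
  simp only [Sym.ofFn_eq_ofFn_iff, funext_iff, Function.comp_apply]
  refine exists_congr fun σ => ?_
  refine (forall_congr' fun i => ?_).trans (Classical.skolem (p := fun i h => h • f (σ i) = g i))
  rw [eq_comm, Quotient.eq'', orbitRel_apply, mem_orbit_iff]

lemma Sym.natCard_eq_choose (α : Type*) [Finite α] (k : ℕ) :
    Nat.card (Sym α k) = (Nat.card α + k - 1).choose k := by
  classical
  have := Fintype.ofFinite α
  rw [Nat.card_eq_fintype_card, Sym.card_sym_eq_choose, Nat.card_eq_fintype_card]

section ProductWreath

variable {Δ : Type*} {G : Subgroup (Equiv.Perm Δ)} {m : ℕ}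

lemma exists_productWreath_smul_eq_iff {p q : (Fin m → Δ) × (Fin m → Δ)} :
    (∃ w : productWreath G m, w • p = q) ↔ ∃ (σ : Equiv.Perm (Fin m)) (h : Fin m → G),
      ∀ i, h i • (p.1 (σ i), p.2 (σ i)) = (q.1 i, q.2 i) := by
  constructor
  · rintro ⟨⟨w, σ, g, hg, hw⟩, rfl⟩
    exact ⟨σ⁻¹, fun i => ⟨g i, hg i⟩, fun i => Prod.ext (hw p.1 i).symm (hw p.2 i).symm⟩
  · rintro ⟨σ, h, hpq⟩
    let w : Equiv.Perm (Fin m → Δ) :=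
      (σ.symm.arrowCongr (Equiv.refl Δ)).trans (Equiv.piCongrRight fun i => (h i).1)
    exact ⟨⟨w, σ⁻¹, fun i => h i, fun i => (h i).2, fun _ _ => rfl⟩,
      Prod.ext (funext fun i => congrArg Prod.fst (hpq i))
        (funext fun i => congrArg Prod.snd (hpq i))⟩

variable (G) in
def pairOrbitSym (p : (Fin m → Δ) × (Fin m → Δ)) : Sym (orbitRel.Quotient G (Δ × Δ)) m :=
  Sym.ofFn fun i => Quotient.mk'' (p.1 i, p.2 i)

lemma pairOrbitSym_eq_iff {p q : (Fin m → Δ) × (Fin m → Δ)} :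
    pairOrbitSym G p = pairOrbitSym G q ↔ q ∈ orbit (productWreath G m) p := by
  rw [pairOrbitSym, pairOrbitSym, Sym.ofFn_orbitRel_mk_eq_iff, mem_orbit_iff,
    exists_productWreath_smul_eq_iff]

lemma pairOrbitSym_surjective : Function.Surjective (pairOrbitSym G (m := m)) := by
  intro s
  obtain ⟨T, rfl⟩ := Sym.ofFn_surjective s
  exact ⟨(fun i => (T i).out.1, fun i => (T i).out.2),
    congrArg Sym.ofFn (funext fun i => Quotient.out_eq' (T i))⟩

variable (G m) in
noncomputable def productWreathPairOrbitsEquiv :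
    orbitRel.Quotient (productWreath G m) ((Fin m → Δ) × (Fin m → Δ)) ≃
      Sym (orbitRel.Quotient G (Δ × Δ)) m :=
  Equiv.ofBijective
    (Quotient.lift (pairOrbitSym G) fun _ _ hpq => (pairOrbitSym_eq_iff.2 hpq).symm)
    ⟨fun x y => Quotient.inductionOn₂ x y fun _ _ h =>
        Quotient.sound (pairOrbitSym_eq_iff.1 h.symm),
      Function.Surjective.of_comp (g := Quotient.mk _) pairOrbitSym_surjective⟩

end ProductWreath

theorem permRank_productWreath_general {Δ : Type*} [Finite Δ] (G : Subgroup (Equiv.Perm Δ))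
    (r m : ℕ) (hr : permRank G = r) :
    permRank (productWreath G m) = (r + m - 1).choose m := by
  rw [← hr, permRank, permRank, Nat.card_congr (productWreathPairOrbitsEquiv G m),
    Sym.natCard_eq_choose]

/-- If `G ≤ Sym(Δ)` is transitive of rank `r` and `m ≥ 1`, then
the product-action wreath product `G ↑ Sym(m)` on `Δ^m` has rank `C(r+m-1, m)`. -/
theorem permRank_productWreath {Δ : Type*} [Finite Δ] (G : Subgroup (Equiv.Perm Δ))
    (htrans : MulAction.IsPretransitive G Δ) (r m : ℕ) (hr : permRank G = r)
    (hm : 1 ≤ m) :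
    permRank (productWreath G m) = (r + m - 1).choose m :=
  permRank_productWreath_general G r m hr
end

section
/- Let Δ be a finite set with |Δ| ≥ 2, and let H(2, |Δ|) be the Hamming graph whose vertex set is Δ × Δ, two distinct vertices being adjacent if and only if they differ in exactly one coordinate. Then the automorphism group of H(2, |Δ|) is exactly Sym(Δ) ↑ Sym(2); that is, the automorphisms of H(2, |Δ|) are precisely the maps (a, b) ↦ (g(a), h(b)) and (a, b) ↦ (g(b), h(a)) with g, h ∈ Sym(Δ). -/
/-- Adjacency in the Hamming graph `H(2, |Δ|)` on `Δ × Δ`: two vertices are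
adjacent iff they differ in exactly one coordinate. -/
def hammingAdj {Δ : Type*} (p q : Δ × Δ) : Prop :=
  (p.1 = q.1 ∧ p.2 ≠ q.2) ∨ (p.1 ≠ q.1 ∧ p.2 = q.2)

namespace AutHammingAux

variable {Δ : Type*}

lemma adj_swap (p q : Δ × Δ) :
    hammingAdj (p.2, p.1) (q.2, q.1) ↔ hammingAdj p q := by
  simp only [hammingAdj]; tauto

/-- If two points of a row map to the same row, the whole row maps into it. -/
lemma key (F : Δ × Δ → Δ × Δ)
    (hF : ∀ p q, hammingAdj p q → hammingAdj (F p) (F q))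
    {a b0 b1 : Δ} (h01 : b0 ≠ b1)
    (hc : (F (a, b0)).1 = (F (a, b1)).1) (b : Δ) :
    (F (a, b)).1 = (F (a, b0)).1 := by
  by_cases hb0 : b = b0
  · rw [hb0]
  by_cases hb1 : b = b1
  · rw [hb1, hc]
  have h0 := hF (a, b) (a, b0) (Or.inl ⟨rfl, hb0⟩)
  have h1 := hF (a, b) (a, b1) (Or.inl ⟨rfl, hb1⟩)
  have h01' := hF (a, b0) (a, b1) (Or.inl ⟨rfl, h01⟩)
  unfold hammingAdj at h0 h1 h01'
  rcases h0 with ⟨h, _⟩ | ⟨_, h⟩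
  · exact h
  rcases h1 with ⟨h', _⟩ | ⟨_, h'⟩
  · rw [h', ← hc]
  exfalso
  rcases h01' with ⟨_, hne⟩ | ⟨hne, _⟩
  · exact hne (h.symm.trans h')
  · exact hne hc

lemma key2 (F : Δ × Δ → Δ × Δ)
    (hF : ∀ p q, hammingAdj p q → hammingAdj (F p) (F q))
    {a b0 b1 : Δ} (h01 : b0 ≠ b1)
    (hc : (F (a, b0)).2 = (F (a, b1)).2) (b : Δ) :
    (F (a, b)).2 = (F (a, b0)).2 :=
  key (fun p => ((F p).2, (F p).1))
    (fun p q h => (adj_swap (F p) (F q)).mpr (hF p q h)) h01 hc b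

/-- Every row maps into a single row or a single column. -/
lemma lineRow [Nontrivial Δ] (F : Δ × Δ → Δ × Δ)
    (hF : ∀ p q, hammingAdj p q → hammingAdj (F p) (F q)) (a : Δ) :
    (∀ b b', (F (a, b)).1 = (F (a, b')).1) ∨
      (∀ b b', (F (a, b)).2 = (F (a, b')).2) := by
  obtain ⟨b0, b1, h01⟩ := exists_pair_ne Δ
  have hadj := hF (a, b0) (a, b1) (Or.inl ⟨rfl, h01⟩)
  rcases hadj with ⟨hc, _⟩ | ⟨_, hc⟩
  · left; intro b b'; rw [key F hF h01 hc b, key F hF h01 hc b']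
  · right; intro b b'; rw [key2 F hF h01 hc b, key2 F hF h01 hc b']

/-- Every column maps into a single row or a single column. -/
lemma lineCol [Nontrivial Δ] (F : Δ × Δ → Δ × Δ)
    (hF : ∀ p q, hammingAdj p q → hammingAdj (F p) (F q)) (b : Δ) :
    (∀ a a', (F (a, b)).1 = (F (a', b)).1) ∨
      (∀ a a', (F (a, b)).2 = (F (a', b)).2) := by
  have := lineRow (fun p => ((F (p.2, p.1)).2, (F (p.2, p.1)).1))
    (fun p q h =>
      (adj_swap (F (p.2, p.1)) (F (q.2, q.1))).mpr
        (hF (p.2, p.1) (q.2, q.1) ((adj_swap p q).mpr h))) b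
  dsimp only at this
  exact this.symm

/-- Main lemma: if one row maps into a row, then `F` has product form. -/
lemma main [Finite Δ] [Nontrivial Δ] (F : Equiv.Perm (Δ × Δ))
    (hF : ∀ p q, hammingAdj (F p) (F q) ↔ hammingAdj p q)
    (a0 : Δ) (h0 : ∀ b b', (F (a0, b)).1 = (F (a0, b')).1) :
    ∃ g h : Equiv.Perm Δ, ∀ p : Δ × Δ, F p = (g p.1, h p.2) := by
  have hF1 : ∀ p q, hammingAdj p q → hammingAdj (F p) (F q) :=
    fun p q h => (hF p q).mpr h
  -- Step A: every column maps into a single column.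
  have colT : ∀ b a a', (F (a, b)).2 = (F (a', b)).2 := by
    intro b
    rcases lineCol F hF1 b with hrow | hcol
    · exfalso
      obtain ⟨a1, ha1⟩ := exists_ne a0
      obtain ⟨b', hb'⟩ := exists_ne b
      have hnadj : ¬ hammingAdj (F (a1, b)) (F (a0, b')) := by
        rw [hF]
        rintro (⟨h1, _⟩ | ⟨_, h2⟩)
        · exact ha1 h1
        · exact hb' h2.symm
      have hne : F (a1, b) ≠ F (a0, b') := by
        intro h
        exact ha1 (congrArg Prod.fst (F.injective h))
      have h1 : (F (a1, b)).1 = (F (a0, b')).1 := (hrow a1 a0).trans (h0 b b')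
      exact hnadj (Or.inl ⟨h1, fun h2 => hne (Prod.ext h1 h2)⟩)
    · exact hcol
  -- Step B: every row maps into a single row.
  have rowT : ∀ a b b', (F (a, b)).1 = (F (a, b')).1 := by
    intro a
    rcases lineRow F hF1 a with h | hcol2
    · exact h
    · exfalso
      obtain ⟨a1, ha1⟩ := exists_ne a
      obtain ⟨b1, b2, hb12⟩ := exists_pair_ne Δ
      have hnadj : ¬ hammingAdj (F (a, b1)) (F (a1, b2)) := by
        rw [hF]
        rintro (⟨h1, _⟩ | ⟨_, h2⟩)
        · exact ha1 h1.symm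
        · exact hb12 h2
      have hne : F (a, b1) ≠ F (a1, b2) := by
        intro h
        exact hb12 (congrArg Prod.snd (F.injective h))
      have h2 : (F (a, b1)).2 = (F (a1, b2)).2 := (hcol2 b1 b2).trans (colT b2 a a1)
      exact hnadj (Or.inr ⟨fun h1 => hne (Prod.ext h1 h2), h2⟩)
  obtain ⟨x0⟩ : Nonempty Δ := inferInstance
  set G : Δ → Δ := fun a => (F (a, x0)).1 with hG
  set H : Δ → Δ := fun b => (F (x0, b)).2 with hH
  have hFval : ∀ a b, F (a, b) = (G a, H b) := fun a b =>
    Prod.ext (rowT a b x0) (colT b a x0)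
  have hGinj : Function.Injective G := by
    intro a a' h
    have : F (a, x0) = F (a', x0) := by rw [hFval, hFval, h]
    exact congrArg Prod.fst (F.injective this)
  have hHinj : Function.Injective H := by
    intro b b' h
    have : F (x0, b) = F (x0, b') := by rw [hFval, hFval, h]
    exact congrArg Prod.snd (F.injective this)
  refine ⟨Equiv.ofBijective G (Finite.injective_iff_bijective.mp hGinj),
      Equiv.ofBijective H (Finite.injective_iff_bijective.mp hHinj), ?_⟩
  intro p
  obtain ⟨a, b⟩ := p
  exact hFval a b

end AutHammingAux

/-- The automorphisms of the Hamming graph `H(2, |Δ|)` are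
precisely the maps `(a, b) ↦ (g a, h b)` and `(a, b) ↦ (g b, h a)` with
`g, h ∈ Sym(Δ)`; i.e. `Aut(H(2, |Δ|)) = Sym(Δ) ↑ Sym(2)`. -/
theorem aut_hamming_graph {Δ : Type*} [Fintype Δ] (hΔ : 2 ≤ Fintype.card Δ)
    (f : Equiv.Perm (Δ × Δ)) :
    (∀ p q : Δ × Δ, hammingAdj (f p) (f q) ↔ hammingAdj p q) ↔
      ∃ g h : Equiv.Perm Δ,
        (∀ p : Δ × Δ, f p = (g p.1, h p.2)) ∨ (∀ p : Δ × Δ, f p = (g p.2, h p.1)) := by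
  have hnt : Nontrivial Δ := Fintype.one_lt_card_iff_nontrivial.mp hΔ
  constructor
  · intro hF
    have hF1 : ∀ p q, hammingAdj p q → hammingAdj (f p) (f q) :=
      fun p q h => (hF p q).mpr h
    obtain ⟨a0⟩ : Nonempty Δ := inferInstance
    rcases AutHammingAux.lineRow f hF1 a0 with hrow | hcol
    · obtain ⟨g, h, hgh⟩ := AutHammingAux.main f hF a0 hrow
      exact ⟨g, h, Or.inl hgh⟩
    · set F' : Equiv.Perm (Δ × Δ) := f.trans (Equiv.prodComm Δ Δ) with hF'def
      have hF'eq : ∀ p, F' p = ((f p).2, (f p).1) := fun p => rfl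
      have hF' : ∀ p q, hammingAdj (F' p) (F' q) ↔ hammingAdj p q := by
        intro p q
        rw [hF'eq, hF'eq]
        exact (AutHammingAux.adj_swap (f p) (f q)).trans (hF p q)
      have h0' : ∀ b b', (F' (a0, b)).1 = (F' (a0, b')).1 := by
        intro b b'
        rw [hF'eq, hF'eq]
        exact hcol b b'
      obtain ⟨g, h, hgh⟩ := AutHammingAux.main F' hF' a0 h0'
      refine ⟨h, g, Or.inr ?_⟩
      intro p
      have := hgh p
      rw [hF'eq] at this
      exact Prod.ext (congrArg Prod.snd this) (congrArg Prod.fst this)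
  · rintro ⟨g, h, hgh | hgh⟩ <;> intro p q <;> rw [hgh p, hgh q] <;>
      simp only [hammingAdj, ne_eq, Equiv.apply_eq_iff_eq] <;> tauto
end

section
/- Let p be a prime, d ≥ 1 and q = p^d, and let G be a primitive rank 3 permutation group on GF(q) with T ≤ G ≤ AΓL_1(q), where T is the group of translations of GF(q). Let m_1 and m_2 be the two nontrivial subdegrees of G, with m_1 < m_2. Then m_1 divides m_2 and the quotient m_2/m_1 divides d. -/
/-- A permutation group `G ≤ Sym(Ω)` is primitive if it is transitive and
every block of `G` is trivial (a subsingleton or the whole domain), i.e. `G`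
preserves no partition of `Ω` other than the partition into singletons and the
partition with a single part. -/
def IsPrimitivePerm {Ω : Type*} (G : Subgroup (Equiv.Perm Ω)) : Prop :=
  MulAction.IsPretransitive G Ω ∧
    ∀ B : Set Ω, MulAction.IsBlock G B → B.Subsingleton ∨ B = Set.univ

/-- The one-dimensional affine semilinear group `AΓL₁(F)`, as the set of all
permutations of the field `F` of the form `x ↦ a • α x + b` with `a ∈ Fˣ`,
`b ∈ F` and `α` a field automorphism of `F`. -/
def AGammaL1 (F : Type*) [Field F] : Set (Equiv.Perm F) :=
  {f | ∃ (a : Fˣ) (b : F) (α : F ≃+* F), ∀ x, f x = (a : F) * α x + b}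

/-- The set of translations `x ↦ x + b` of the field `F`. -/
def translationsSet (F : Type*) [Field F] : Set (Equiv.Perm F) :=
  {f | ∃ b : F, ∀ x, f x = x + b}

/-- The set of nontrivial subdegrees of a transitive group `G ≤ Sym(F)` relative
to the point `0`: the cardinalities of the orbits of the stabilizer of `0` in `G`
on the nonzero points. -/
noncomputable def subdegreeSet (F : Type*) [Field F] (G : Subgroup (Equiv.Perm F)) :
    Set ℕ :=
  {n | ∃ x : F, x ≠ 0 ∧ n = Nat.card (MulAction.orbit (MulAction.stabilizer G (0 : F)) x)}

/-!
Let `S` be the stabilizer of `0` in `G`. It acts on `F` by maps `x ↦ a * α x`, and `α` gives a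
homomorphism `Ψ : S → Aut F` into a cyclic group of order `d` whose kernel consists of scalar
multiplications; hence `Ψ` is injective on each point stabilizer `S_x` (`x ≠ 0`) and
`m_i * |Ψ(S_{x_i})| = |S|`. As `G` has rank 3 and is transitive, `S` has exactly two orbits on
`Fˣ`. The heart of the proof is `Ψ(S_{x₂}) ≤ Ψ(S_{x₁})`. For `g ∈ S_{x₂}` and `H` the group of
scalars of `S`, the set of `u ∈ Fˣ` with `g u ∈ u H` contains the orbit of `x₂` because `Aut F` is
abelian, and it is the preimage of a coset of `H` under the homomorphism `u ↦ α u / u`, so its size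
divides `q - 1 = m₁ + m₂`. Were it disjoint from the orbit of `x₁`, it would be the orbit of `x₂`,
forcing `m₂ ∣ m₁`. So `m₂ / m₁` is the index of `Ψ(S_{x₂})` in `Ψ(S_{x₁})`, which divides `d`.
-/

open MulAction

def ZMod.ringAutEquivAlgAut (n : ℕ) (R : Type*) [Ring R] [Algebra (ZMod n) R] :
    (R ≃+* R) ≃* (R ≃ₐ[ZMod n] R) where
  toFun f := AlgEquiv.ofRingEquiv (f := f) fun x =>
    RingHom.congr_fun (RingHom.ext_zmod ((f : R →+* R).comp (algebraMap _ R)) (algebraMap _ R)) x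
  invFun f := f.toRingEquiv
  left_inv _ := rfl
  right_inv _ := rfl
  map_mul' _ _ := rfl

instance FiniteField.isCyclic_ringAut (F : Type*) [Field F] [Finite F] : IsCyclic (F ≃+* F) := by
  obtain ⟨p, _⟩ := CharP.exists F
  have := Fact.mk (CharP.char_is_prime F p)
  let := ZMod.algebra F p
  exact isCyclic_of_surjective (ZMod.ringAutEquivAlgAut p F).symm.toMonoidHom
    (ZMod.ringAutEquivAlgAut p F).symm.surjective

theorem FiniteField.card_ringAut {F : Type*} [Field F] [Fintype F] {p d : ℕ} (hp : p.Prime)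
    (hcard : Fintype.card F = p ^ d) : Nat.card (F ≃+* F) = d := by
  have := Fact.mk hp
  have := charP_of_card_eq_prime_pow hcard
  let := ZMod.algebra F p
  rw [Nat.card_congr (ZMod.ringAutEquivAlgAut p F).toEquiv, IsGalois.card_aut_eq_finrank]
  refine Nat.pow_right_injective hp.two_le ?_
  show p ^ _ = p ^ d
  rw [← hcard, Module.card_eq_pow_finrank (K := ZMod p), ZMod.card]

instance FiniteField.finite_ringAut (F : Type*) [Field F] [Finite F] : Finite (F ≃+* F) :=
  Finite.of_injective _ (DFunLike.coe_injective (F := F ≃+* F))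

theorem Subgroup.card_setOf_mul_map_mem_dvd {A B : Type*} [Group A] [Group B] [Finite A]
    (f : A →* B) (K : Subgroup B) (c : B) (hne : ∃ a, c * f a ∈ K) :
    Nat.card {a | c * f a ∈ K} ∣ Nat.card A := by
  obtain ⟨a₀, ha₀⟩ := hne
  have e : {a | c * f a ∈ K} ≃ K.comap f := Equiv.subtypeEquiv (Equiv.mulLeft a₀⁻¹) fun a => by
    rw [Set.mem_ofPred_eq, ← K.mul_mem_cancel_left (K.inv_mem ha₀)]
    simp [Subgroup.mem_comap, mul_assoc]
  rw [Nat.card_congr e]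
  exact Subgroup.card_subgroup_dvd_card _

section SemilinearAction

variable (M F : Type*) [Group M] [Field F] [MulAction M F]

/-- `M` acts through `ΓL₁(F)`; the scalar `a` of `x ↦ a * α x` is necessarily `m • 1`. -/
def IsSemilinearAction : Prop :=
  ∀ m : M, ∃ α : F ≃+* F, ∀ x : F, m • x = m • (1 : F) * α x

def scalarSubgroup : Subgroup Fˣ where
  carrier := {u | ∃ m : M, ∀ x : F, m • x = u * x}
  mul_mem' := by
    rintro _ _ ⟨m, hm⟩ ⟨n, hn⟩
    exact ⟨m * n, fun x => by rw [mul_smul, hn, hm, Units.val_mul, mul_assoc]⟩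
  one_mem' := ⟨1, fun x => by rw [one_smul, Units.val_one, one_mul]⟩
  inv_mem' := by
    rintro u ⟨m, hm⟩
    exact ⟨m⁻¹, fun x => by rw [inv_smul_eq_iff, hm, ← mul_assoc, Units.mul_inv, one_mul]⟩

variable {M F}

namespace IsSemilinearAction

theorem smul_one_ne_zero_of_forall_smul_eq {m : M} {α : F ≃+* F}
    (hα : ∀ x : F, m • x = m • (1 : F) * α x) : m • (1 : F) ≠ 0 := by
  intro h0
  have : m • (1 : F) = m • 0 := by rw [hα 0, map_zero, mul_zero, h0]
  exact one_ne_zero (smul_left_cancel m this)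

theorem ringEquiv_eq_of_forall_smul_eq {m : M} {α β : F ≃+* F}
    (hα : ∀ x : F, m • x = m • (1 : F) * α x) (hβ : ∀ x : F, m • x = m • (1 : F) * β x) :
    α = β :=
  RingEquiv.ext fun x =>
    mul_left_cancel₀ (smul_one_ne_zero_of_forall_smul_eq hα) ((hα x).symm.trans (hβ x))

variable (h : IsSemilinearAction M F)
include h

noncomputable def fieldAut : M →* (F ≃+* F) where
  toFun m := (h m).choose
  map_one' := ringEquiv_eq_of_forall_smul_eq (h 1).choose_spec fun x => by simp
  map_mul' m n := by
    refine ringEquiv_eq_of_forall_smul_eq (h (m * n)).choose_spec fun x => ?_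
    have hm := (h m).choose_spec
    have hn := (h n).choose_spec
    generalize (h m).choose = α at hm ⊢
    generalize (h n).choose = β at hn ⊢
    rw [mul_smul, mul_smul, hn x, hn 1, map_one, mul_one, hm, hm (n • (1 : F)), map_mul,
      mul_assoc]
    rfl

theorem smul_eq_mul_fieldAut (m : M) (x : F) : m • x = m • (1 : F) * h.fieldAut m x :=
  (h m).choose_spec x

theorem smul_one_ne_zero (m : M) : m • (1 : F) ≠ 0 :=
  smul_one_ne_zero_of_forall_smul_eq (h.smul_eq_mul_fieldAut m)

theorem smul_eq_zero_iff {m : M} {x : F} : m • x = 0 ↔ x = 0 := by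
  rw [h.smul_eq_mul_fieldAut m, mul_eq_zero, map_eq_zero_iff _ (h.fieldAut m).injective,
    or_iff_right (h.smul_one_ne_zero m)]

theorem ne_zero_of_mem_orbit {x y : F} (hx : x ≠ 0) (hy : y ∈ orbit M x) : y ≠ 0 := by
  obtain ⟨m, rfl⟩ := hy
  exact h.smul_eq_zero_iff.not.mpr hx

theorem fieldAut_eq_one_of_smul_eq_mul {k : M} {b : F} (hk : ∀ x : F, k • x = b * x) :
    h.fieldAut k = 1 :=
  ringEquiv_eq_of_forall_smul_eq (h.smul_eq_mul_fieldAut k) fun x => by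
    rw [hk, hk, mul_one]; rfl

theorem exists_mem_scalarSubgroup_of_fieldAut_eq_one {k : M} (hk : h.fieldAut k = 1) :
    ∃ b ∈ scalarSubgroup M F, ∀ x : F, k • x = b * x := by
  have hkx : ∀ x : F, k • x = k • (1 : F) * x := fun x => by
    rw [h.smul_eq_mul_fieldAut k, hk]; rfl
  exact ⟨Units.mk0 _ (h.smul_one_ne_zero k), ⟨k, hkx⟩, hkx⟩

theorem eq_one_of_fieldAut_eq_one [FaithfulSMul M F] {k : M} {x : F} (hx : x ≠ 0)
    (hk : h.fieldAut k = 1) (hkx : k • x = x) : k = 1 := by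
  obtain ⟨b, -, hb⟩ := h.exists_mem_scalarSubgroup_of_fieldAut_eq_one hk
  have hb1 : (b : F) = 1 := mul_right_cancel₀ hx (by rw [← hb, hkx, one_mul])
  exact eq_of_smul_eq_smul fun y => by rw [hb, hb1, one_mul, one_smul]

theorem card_map_stabilizer_mul_card_orbit [FaithfulSMul M F] {x : F} (hx : x ≠ 0) :
    Nat.card ((stabilizer M x).map h.fieldAut) * Nat.card (orbit M x) = Nat.card M := by
  have hinj : Set.InjOn h.fieldAut (stabilizer M x) := fun g hg g' hg' hgg' => by
    have hk : g⁻¹ * g' = 1 := h.eq_one_of_fieldAut_eq_one hx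
      (by rw [map_mul, map_inv, hgg', inv_mul_cancel])
      (by rw [mul_smul, mem_stabilizer_iff.mp hg', inv_smul_eq_iff, mem_stabilizer_iff.mp hg])
    exact inv_mul_eq_one.mp hk
  have hcard : Nat.card ((stabilizer M x).map h.fieldAut) = Nat.card (stabilizer M x) :=
    Nat.card_image_of_injOn hinj
  rw [hcard, Nat.card_coe_set_eq, ← index_stabilizer, Subgroup.card_mul_index]

variable [Finite F]

theorem exists_mem_scalarSubgroup_smul_eq_mul_of_mem_orbit {g : M} {y u : F} (hg : g • y = y)
    (hu : u ∈ orbit M y) : ∃ b ∈ scalarSubgroup M F, g • u = b * u := by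
  obtain ⟨s, rfl⟩ := hu
  have hcomm : h.fieldAut (g * s * g⁻¹ * s⁻¹) = 1 := by
    rw [map_mul, map_mul, map_mul, mul_comm' (h.fieldAut g), map_inv, map_inv]; group
  obtain ⟨b, hb, hbs⟩ := h.exists_mem_scalarSubgroup_of_fieldAut_eq_one hcomm
  refine ⟨b, hb, ?_⟩
  calc g • s • y = (g * s * g⁻¹ * s⁻¹ * s * g) • y := by
        rw [show g * s * g⁻¹ * s⁻¹ * s * g = g * s by group, mul_smul]
    _ = (g * s * g⁻¹ * s⁻¹) • s • g • y := by rw [mul_smul, mul_smul]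
    _ = b * s • y := by rw [hg, hbs]

theorem fieldAut_mem_map_stabilizer_of_smul_eq_mul {g : M} {y u : F} {b : Fˣ}
    (hb : b ∈ scalarSubgroup M F) (hgu : g • u = b * u) (hu : u ∈ orbit M y) :
    h.fieldAut g ∈ (stabilizer M y).map h.fieldAut := by
  obtain ⟨n, hn⟩ := hb
  obtain ⟨s, rfl⟩ := hu
  refine ⟨s⁻¹ * n⁻¹ * g * s, show _ ∈ stabilizer M y from ?_, ?_⟩
  · rw [mem_stabilizer_iff, mul_smul, mul_smul, mul_smul, hgu, ← hn, inv_smul_smul, inv_smul_smul]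
  · rw [map_mul, map_mul, map_mul, map_inv, map_inv, h.fieldAut_eq_one_of_smul_eq_mul hn,
      inv_one, mul_one, mul_comm' _ (h.fieldAut s), mul_inv_cancel_left]

theorem card_setOf_smul_eq_mul_dvd (g : M)
    (hne : ∃ u : Fˣ, ∃ b ∈ scalarSubgroup M F, g • (u : F) = b * u) :
    Nat.card {u : Fˣ | ∃ b ∈ scalarSubgroup M F, g • (u : F) = b * u} ∣ Nat.card Fˣ := by
  set a : Fˣ := Units.mk0 _ (h.smul_one_ne_zero g)
  set χ : Fˣ →* Fˣ := Units.map (h.fieldAut g : F →* F) / MonoidHom.id Fˣ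
  have key : ∀ u : Fˣ, (∃ b ∈ scalarSubgroup M F, g • (u : F) = b * u) ↔
      a * χ u ∈ scalarSubgroup M F := by
    intro u
    have hw : g • (u : F) = ((a * χ u : Fˣ) : F) * u := by
      simp [a, χ, h.smul_eq_mul_fieldAut g (u : F), mul_assoc, div_mul_cancel₀ _ u.ne_zero]
    constructor
    · rintro ⟨b, hb, hbu⟩
      rwa [← Units.ext (mul_right_cancel₀ u.ne_zero (hbu.symm.trans hw))]
    · exact fun hu => ⟨_, hu, hw⟩
  simp only [key] at hne ⊢
  exact Subgroup.card_setOf_mul_map_mem_dvd χ _ a hne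

theorem card_units_eq_card_orbit_add_card_orbit {x₁ x₂ : F} (hx₁ : x₁ ≠ 0) (hx₂ : x₂ ≠ 0)
    (hcover : ∀ x ≠ 0, x ∈ orbit M x₁ ∨ x ∈ orbit M x₂)
    (hne : Nat.card (orbit M x₁) ≠ Nat.card (orbit M x₂)) :
    Nat.card Fˣ = Nat.card (orbit M x₁) + Nat.card (orbit M x₂) := by
  have hunion : {x : F | x ≠ 0} = orbit M x₁ ∪ orbit M x₂ := by
    ext x
    refine ⟨hcover x, ?_⟩
    rintro (⟨m, rfl⟩ | ⟨m, rfl⟩) <;> exact h.smul_eq_zero_iff.not.mpr ‹_›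
  have hdisj : Disjoint (orbit M x₁) (orbit M x₂) :=
    (orbit.eq_or_disjoint x₁ x₂).resolve_left fun heq => hne (by rw [heq])
  rw [Nat.card_congr unitsEquivNeZero, ← Set.coe_ofPred, Nat.card_coe_set_eq, hunion,
    Set.ncard_union_eq hdisj, Nat.card_coe_set_eq, Nat.card_coe_set_eq]

theorem map_stabilizer_le {x₁ x₂ : F} (hx₁ : x₁ ≠ 0) (hx₂ : x₂ ≠ 0)
    (hcover : ∀ x ≠ 0, x ∈ orbit M x₁ ∨ x ∈ orbit M x₂)
    (hlt : Nat.card (orbit M x₁) < Nat.card (orbit M x₂)) :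
    (stabilizer M x₂).map h.fieldAut ≤ (stabilizer M x₁).map h.fieldAut := by
  rintro _ ⟨g, hg, rfl⟩
  by_contra hg₁
  have hX : {u : Fˣ | ∃ b ∈ scalarSubgroup M F, g • (u : F) = b * u} =
      Units.val ⁻¹' orbit M x₂ := by
    ext u
    refine ⟨fun ⟨b, hb, hgu⟩ => (hcover u u.ne_zero).resolve_left fun hu =>
      hg₁ (h.fieldAut_mem_map_stabilizer_of_smul_eq_mul hb hgu hu), ?_⟩
    exact h.exists_mem_scalarSubgroup_smul_eq_mul_of_mem_orbit hg
  have hdvd := h.card_setOf_smul_eq_mul_dvd g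
    ⟨Units.mk0 x₂ hx₂, h.exists_mem_scalarSubgroup_smul_eq_mul_of_mem_orbit hg (mem_orbit_self x₂)⟩
  have horbit : orbit M x₂ ⊆ Set.range Units.val := fun y hy =>
    ⟨Units.mk0 y (h.ne_zero_of_mem_orbit hx₂ hy), rfl⟩
  rw [hX, Nat.card_coe_set_eq, Set.ncard_preimage_of_injective_subset_range Units.val_injective
    horbit, ← Nat.card_coe_set_eq, h.card_units_eq_card_orbit_add_card_orbit hx₁ hx₂ hcover hlt.ne,
    Nat.dvd_add_self_right] at hdvd
  have := (nonempty_orbit (M := M) x₁).to_subtype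
  exact hlt.not_ge (Nat.le_of_dvd Nat.card_pos hdvd)

theorem card_orbit_dvd_and_div_dvd_card_ringAut [FaithfulSMul M F] {x₁ x₂ : F} (hx₁ : x₁ ≠ 0)
    (hx₂ : x₂ ≠ 0) (hcover : ∀ x ≠ 0, x ∈ orbit M x₁ ∨ x ∈ orbit M x₂)
    (hlt : Nat.card (orbit M x₁) < Nat.card (orbit M x₂)) :
    Nat.card (orbit M x₁) ∣ Nat.card (orbit M x₂) ∧
      Nat.card (orbit M x₂) / Nat.card (orbit M x₁) ∣ Nat.card (F ≃+* F) := by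
  have := (nonempty_orbit (M := M) x₁).to_subtype
  obtain ⟨r, hr⟩ := Subgroup.card_dvd_of_le (h.map_stabilizer_le hx₁ hx₂ hcover hlt)
  have hcard₁ := h.card_map_stabilizer_mul_card_orbit hx₁
  have hcard₂ := h.card_map_stabilizer_mul_card_orbit hx₂
  have hm : Nat.card (orbit M x₂) = Nat.card (orbit M x₁) * r := by
    refine Nat.eq_of_mul_eq_mul_left (Nat.card_pos (α := (stabilizer M x₂).map h.fieldAut)) ?_
    rw [hcard₂, ← hcard₁, hr]
    ring
  refine ⟨⟨r, hm⟩, ?_⟩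
  rw [hm, Nat.mul_div_cancel_left r Nat.card_pos]
  exact (Dvd.intro_left _ hr.symm).trans (Subgroup.card_subgroup_dvd_card _)

end IsSemilinearAction

end SemilinearAction

theorem MulAction.card_orbitRel_quotient_stabilizer {G X : Type*} [Group G] [MulAction G X]
    [IsPretransitive G X] (x : X) :
    Nat.card (orbitRel.Quotient (stabilizer G x) X) = Nat.card (orbitRel.Quotient G (X × X)) := by
  refine Nat.card_eq_of_bijective
    (Quotient.map' (fun y => (x, y)) fun a b hab => ?_) ⟨fun a b => ?_, fun c => ?_⟩
  · obtain ⟨⟨g, hg⟩, rfl⟩ := orbitRel_apply.mp hab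
    exact orbitRel_apply.mpr ⟨g, Prod.ext (mem_stabilizer_iff.mp hg) rfl⟩
  · induction a using Quotient.inductionOn'
    induction b using Quotient.inductionOn'
    intro hab
    obtain ⟨g, hg⟩ := orbitRel_apply.mp (Quotient.exact' hab)
    exact Quotient.sound' (orbitRel_apply.mpr ⟨⟨g, congrArg Prod.fst hg⟩, congrArg Prod.snd hg⟩)
  · induction c using Quotient.inductionOn' with | h c =>
    obtain ⟨g, hg⟩ := exists_smul_eq G c.1 x
    exact ⟨Quotient.mk'' (g • c.2), Quotient.sound' (orbitRel_apply.mpr ⟨g, Prod.ext hg rfl⟩)⟩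

theorem eq_or_eq_or_eq_of_card_eq_three {α : Type*} (h : Nat.card α = 3) {a b c : α}
    (hab : a ≠ b) (hac : a ≠ c) (hbc : b ≠ c) (y : α) : y = a ∨ y = b ∨ y = c := by
  classical
  have : Finite α := Nat.finite_of_card_ne_zero (by rw [h]; norm_num)
  have := Fintype.ofFinite α
  have huniv : ({a, b, c} : Finset α) = Finset.univ := Finset.eq_univ_of_card _ <| by
    rw [Finset.card_eq_three.mpr ⟨a, b, c, hab, hac, hbc, rfl⟩, ← Nat.card_eq_fintype_card, h]
  simpa [← huniv] using Finset.mem_univ y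

theorem mem_orbit_or_mem_orbit_of_permRank_eq_three {F : Type*} [Field F]
    {G : Subgroup (Equiv.Perm F)} (hT : translationsSet F ⊆ (G : Set (Equiv.Perm F)))
    (hrank : permRank G = 3) {x₁ x₂ : F} (hx₁ : x₁ ≠ 0) (hx₂ : x₂ ≠ 0)
    (hne : orbit (stabilizer G (0 : F)) x₁ ≠ orbit (stabilizer G (0 : F)) x₂) (x : F)
    (hx : x ≠ 0) : x ∈ orbit (stabilizer G (0 : F)) x₁ ∨ x ∈ orbit (stabilizer G (0 : F)) x₂ := by
  have : IsPretransitive G F :=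
    ⟨fun y z => ⟨⟨Equiv.addRight (z - y), hT ⟨z - y, fun _ => rfl⟩⟩, add_sub_cancel y z⟩⟩
  have h3 := (card_orbitRel_quotient_stabilizer (0 : F)).trans hrank
  have horbit_zero : ∀ y : F, y ∈ orbit (stabilizer G (0 : F)) (0 : F) → y = 0 := by
    rintro _ ⟨⟨g, hg⟩, rfl⟩
    exact hg
  let q : F → orbitRel.Quotient (stabilizer G (0 : F)) F := Quotient.mk''
  have hq : ∀ y z, q y = q z ↔ y ∈ orbit (stabilizer G (0 : F)) z :=
    fun y z => Quotient.eq''.trans orbitRel_apply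
  rcases eq_or_eq_or_eq_of_card_eq_three h3 (a := q 0) (b := q x₁) (c := q x₂)
    (fun h => hx₁ (horbit_zero _ ((hq _ _).mp h.symm)))
    (fun h => hx₂ (horbit_zero _ ((hq _ _).mp h.symm)))
    (fun h => hne (orbit_eq_iff.mpr ((hq _ _).mp h))) (q x) with h | h | h
  · exact absurd (horbit_zero _ ((hq _ _).mp h)) hx
  · exact .inl ((hq _ _).mp h)
  · exact .inr ((hq _ _).mp h)

theorem isSemilinearAction_stabilizer_zero {F : Type*} [Field F] {G : Subgroup (Equiv.Perm F)}
    (hA : (G : Set (Equiv.Perm F)) ⊆ AGammaL1 F) : IsSemilinearAction (stabilizer G (0 : F)) F := by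
  rintro ⟨g, hg⟩
  obtain ⟨a, b, α, hab⟩ := hA g.2
  have hb : b = 0 := by
    have hg0 : (g : Equiv.Perm F) 0 = 0 := mem_stabilizer_iff.mp hg
    rwa [hab, map_zero, mul_zero, zero_add] at hg0
  refine ⟨α, fun x => ?_⟩
  show (g : Equiv.Perm F) x = (g : Equiv.Perm F) 1 * α x
  rw [hab, hab, hb, map_one, add_zero, add_zero, mul_one]

theorem one_dimensional_subdegrees_divisibility_general {F : Type*} [Field F] [Fintype F]
    (p d : ℕ) (hp : p.Prime) (hcard : Fintype.card F = p ^ d)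
    (G : Subgroup (Equiv.Perm F))
    (hT : translationsSet F ⊆ (G : Set (Equiv.Perm F)))
    (hA : (G : Set (Equiv.Perm F)) ⊆ AGammaL1 F)
    (hrank : permRank G = 3)
    (m₁ m₂ : ℕ) (hlt : m₁ < m₂) (hsub : subdegreeSet F G = {m₁, m₂}) :
    m₁ ∣ m₂ ∧ (m₂ / m₁) ∣ d := by
  obtain ⟨x₁, hx₁, rfl⟩ : m₁ ∈ subdegreeSet F G := hsub ▸ Set.mem_insert _ _
  obtain ⟨x₂, hx₂, rfl⟩ : m₂ ∈ subdegreeSet F G := hsub ▸ Set.mem_insert_of_mem _ rfl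
  rw [← FiniteField.card_ringAut hp hcard]
  exact (isSemilinearAction_stabilizer_zero hA).card_orbit_dvd_and_div_dvd_card_ringAut hx₁ hx₂
    (mem_orbit_or_mem_orbit_of_permRank_eq_three hT hrank hx₁ hx₂ fun h => hlt.ne (by rw [h])) hlt

/-- For a primitive rank 3 group `T ≤ G ≤ AΓL₁(p^d)` with
nontrivial subdegrees `m₁ < m₂`, one has `m₁ ∣ m₂` and `(m₂ / m₁) ∣ d`. -/
theorem one_dimensional_subdegrees_divisibility {F : Type*} [Field F] [Fintype F]
    (p d : ℕ) (hp : p.Prime) (hd : 1 ≤ d) (hcard : Fintype.card F = p ^ d)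
    (G : Subgroup (Equiv.Perm F))
    (hT : translationsSet F ⊆ (G : Set (Equiv.Perm F)))
    (hA : (G : Set (Equiv.Perm F)) ⊆ AGammaL1 F)
    (hprim : IsPrimitivePerm G) (hrank : permRank G = 3)
    (m₁ m₂ : ℕ) (hlt : m₁ < m₂) (hsub : subdegreeSet F G = {m₁, m₂}) :
    m₁ ∣ m₂ ∧ (m₂ / m₁) ∣ d :=
  one_dimensional_subdegrees_divisibility_general p d hp hcard G hT hA hrank m₁ m₂ hlt hsub
end
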